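/- Let N ∈ ℕ and let F : ℝ → ℂ be N-times continuously differentiable on [0,1] (derivatives within [0,1]) with F^{(k)}(0) = 0 for every k < N. Then for every ε > 0 there exists a polynomial P ∈ ℂ[X] whose coefficients in degrees < N all vanish, such that for every x ∈ [0,1] and every n ≤ N, ‖F^{(n)}(x) − P^{(n)}(x)‖ ≤ ε · x^{N−n}, where P^{(n)} denotes the n-th formal derivative of P. -/

import Mathlib

/-!
Approximate `F⁽ᴺ⁾` uniformly within `ε` by a polynomial `Q` (Weierstrass, applied to the real and
imaginary parts) and let `P` be the `N`-fold antiderivative of `Q` whose coefficients below degree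
`N` vanish. The errors `Eₙ = F⁽ⁿ⁾ - P⁽ⁿ⁾` satisfy `Eₙ' = Eₙ₊₁` and, for `n < N`, `Eₙ 0 = 0`, so
integrating `‖E_N‖ ≤ ε` down `N - n` times gives `‖Eₙ x‖ ≤ ε xᴺ⁻ⁿ / (N - n)!`.
-/

open Polynomial Set

section Antiderivative

variable {R : Type*} [Field R] [CharZero R]

theorem Polynomial.exists_derivative_eq_and_coeff_zero (q : R[X]) :
    ∃ p : R[X], derivative p = q ∧ p.coeff 0 = 0 := by
  induction q using Polynomial.induction_on' with
  | add q₁ q₂ h₁ h₂ =>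
    obtain ⟨p₁, hp₁, hc₁⟩ := h₁
    obtain ⟨p₂, hp₂, hc₂⟩ := h₂
    exact ⟨p₁ + p₂, by rw [derivative_add, hp₁, hp₂], by rw [coeff_add, hc₁, hc₂, add_zero]⟩
  | monomial n a =>
    refine ⟨monomial (n + 1) (a / (n + 1)), ?_, by simp⟩
    rw [derivative_monomial, Nat.add_sub_cancel]
    push_cast
    rw [div_mul_cancel₀ _ (Nat.cast_add_one_ne_zero n)]

theorem Polynomial.exists_iterate_derivative_eq_and_coeff_lt (N : ℕ) (q : R[X]) :
    ∃ p : R[X], derivative^[N] p = q ∧ ∀ k < N, p.coeff k = 0 := by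
  induction N with
  | zero => exact ⟨q, rfl, fun k hk => absurd hk k.not_lt_zero⟩
  | succ N ih =>
    obtain ⟨p', hp', hc'⟩ := ih
    obtain ⟨p, hp, hc⟩ := exists_derivative_eq_and_coeff_zero p'
    refine ⟨p, by rw [Function.iterate_succ_apply, hp, hp'], fun k hk => ?_⟩
    rcases k with _ | k
    · exact hc
    · have h := hc' k (by omega)
      rw [← hp, coeff_derivative] at h
      exact (mul_eq_zero.mp h).resolve_right (by exact_mod_cast k.succ_ne_zero)

end Antiderivative

theorem Polynomial.coeff_zero_iterate_derivative_eq_zero {R : Type*} [Semiring R] {p : R[X]}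
    {N n : ℕ} (hp : ∀ k < N, p.coeff k = 0) (hn : n < N) : (derivative^[n] p).coeff 0 = 0 := by
  rw [coeff_iterate_derivative, zero_add, hp n hn, smul_zero]

theorem exists_polynomial_near_of_continuousOn_complex (a b : ℝ) (f : ℝ → ℂ)
    (hf : ContinuousOn f (Icc a b)) (ε : ℝ) (hε : 0 < ε) :
    ∃ q : ℂ[X], ∀ x ∈ Icc a b, ‖f x - q.eval (x : ℂ)‖ < ε := by
  obtain ⟨p, hp⟩ := exists_polynomial_near_of_continuousOn a b (fun x => (f x).re)
    (Complex.continuous_re.comp_continuousOn hf) (ε / 2) (half_pos hε)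
  obtain ⟨q, hq⟩ := exists_polynomial_near_of_continuousOn a b (fun x => (f x).im)
    (Complex.continuous_im.comp_continuousOn hf) (ε / 2) (half_pos hε)
  have eval_ofReal (r : ℝ[X]) (x : ℝ) :
      (r.map Complex.ofRealHom).eval (x : ℂ) = ((r.eval x : ℝ) : ℂ) := by
    rw [show (x : ℂ) = Complex.ofRealHom x from rfl, eval_map_apply]; rfl
  refine ⟨p.map Complex.ofRealHom + C Complex.I * q.map Complex.ofRealHom, fun x hx => ?_⟩
  set z := f x - (p.map Complex.ofRealHom + C Complex.I * q.map Complex.ofRealHom).eval (x : ℂ)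
  have hre : |z.re| < ε / 2 := by
    simpa [z, eval_ofReal, abs_sub_comm] using hp x hx
  have him : |z.im| < ε / 2 := by
    simpa [z, eval_ofReal, abs_sub_comm] using hq x hx
  calc ‖z‖ ≤ |z.re| + |z.im| := Complex.norm_le_abs_re_add_abs_im z
    _ < ε := by linarith

section DerivativeBounds

variable {E : Type*} [NormedAddCommGroup E] [NormedSpace ℝ E]

theorem norm_le_mul_pow_succ_div_of_norm_deriv_le {f f' : ℝ → E} {a b C : ℝ} {m : ℕ}
    (hf : ∀ x ∈ Icc a b, HasDerivWithinAt f (f' x) (Icc a b) x) (ha : f a = 0)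
    (bound : ∀ x ∈ Icc a b, ‖f' x‖ ≤ C * (x - a) ^ m) :
    ∀ x ∈ Icc a b, ‖f x‖ ≤ C * (x - a) ^ (m + 1) / (m + 1) := by
  have hB (x : ℝ) :
      HasDerivAt (fun y => C * (y - a) ^ (m + 1) / (m + 1)) (C * (x - a) ^ m) x := by
    refine ((((hasDerivAt_id' x).sub_const a).fun_pow (m + 1)).const_mul C |>.div_const _
      ).congr_deriv ?_
    push_cast
    field_simp
  refine image_norm_le_of_norm_deriv_right_le_deriv_boundary
    (fun x hx => (hf x hx).continuousWithinAt)
    (fun x hx =>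
      (hf x (Ico_subset_Icc_self hx)).mono_of_mem_nhdsWithin (Icc_mem_nhdsGE_of_mem hx))
    (by simp [ha]) hB (fun x hx => bound x (Ico_subset_Icc_self hx))

theorem norm_le_mul_pow_div_factorial_of_hasDerivWithinAt {g : ℕ → ℝ → E} {a b ε : ℝ} {N : ℕ}
    (hg : ∀ n < N, ∀ x ∈ Icc a b, HasDerivWithinAt (g n) (g (n + 1) x) (Icc a b) x)
    (ha : ∀ n < N, g n a = 0) (hN : ∀ x ∈ Icc a b, ‖g N x‖ ≤ ε) :
    ∀ n ≤ N, ∀ x ∈ Icc a b, ‖g n x‖ ≤ ε * (x - a) ^ (N - n) / (N - n).factorial := by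
  suffices ∀ m n, n + m = N → ∀ x ∈ Icc a b, ‖g n x‖ ≤ ε / m.factorial * (x - a) ^ m by
    intro n hn x hx
    rw [mul_div_right_comm]
    exact this (N - n) n (by omega) x hx
  intro m
  induction m with
  | zero =>
    rintro n rfl x hx
    simpa using hN x hx
  | succ m ih =>
    rintro n rfl x hx
    have := norm_le_mul_pow_succ_div_of_norm_deriv_le (hg n (by omega)) (ha n (by omega))
      (ih (n + 1) (by omega)) x hx
    convert this using 1
    rw [Nat.factorial_succ]
    push_cast
    field_simp

end DerivativeBounds

theorem ContDiffOn.hasDerivWithinAt_iteratedDerivWithin {𝕜 F : Type*}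
    [NontriviallyNormedField 𝕜] [NormedAddCommGroup F] [NormedSpace 𝕜 F] {f : 𝕜 → F} {s : Set 𝕜}
    {N : ℕ∞} {n : ℕ}
    (hf : ContDiffOn 𝕜 N f s) (hs : UniqueDiffOn 𝕜 s) (hn : n < N) {x : 𝕜} (hx : x ∈ s) :
    HasDerivWithinAt (iteratedDerivWithin n f s) (iteratedDerivWithin (n + 1) f s x) s x := by
  rw [iteratedDerivWithin_succ]
  exact (hf.differentiableOn_iteratedDerivWithin (by exact_mod_cast hn) hs x hx).hasDerivWithinAt

/-- Weighted Weierstrass approximation: an `N`-times continuously differentiable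
function on `[0,1]` vanishing to order `N` at `0` is approximated, together with
all derivatives up to order `N`, by a polynomial with vanishing low coefficients,
with weighted errors `ε x^{N-n}`. -/
theorem weighted_weierstrass_approximation
    (N : ℕ) (F : ℝ → ℂ)
    (hF : ContDiffOn ℝ (N : ℕ∞) F (Set.Icc 0 1))
    (h0 : ∀ k < N, iteratedDerivWithin k F (Set.Icc 0 1) 0 = 0) :
    ∀ ε > (0:ℝ), ∃ P : Polynomial ℂ,
      (∀ k < N, P.coeff k = 0) ∧
      ∀ x ∈ Set.Icc (0:ℝ) 1, ∀ n ≤ N,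
        ‖iteratedDerivWithin n F (Set.Icc 0 1) x -
            (Polynomial.derivative^[n] P).eval (x : ℂ)‖ ≤ ε * x ^ (N - n) := by
  intro ε hε
  have hs : UniqueDiffOn ℝ (Icc (0 : ℝ) 1) := uniqueDiffOn_Icc one_pos
  obtain ⟨Q, hQ⟩ := exists_polynomial_near_of_continuousOn_complex 0 1 _
    (hF.continuousOn_iteratedDerivWithin le_rfl hs) ε hε
  obtain ⟨P, hPQ, hP⟩ := exists_iterate_derivative_eq_and_coeff_lt N Q
  set E : ℕ → ℝ → ℂ := fun n x =>
    iteratedDerivWithin n F (Icc 0 1) x - (derivative^[n] P).eval (x : ℂ)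
  have hE_deriv : ∀ n < N, ∀ x ∈ Icc 0 1, HasDerivWithinAt (E n) (E (n + 1) x) (Icc 0 1) x := by
    intro n hn x hx
    refine (hF.hasDerivWithinAt_iteratedDerivWithin hs (by exact_mod_cast hn) hx).sub ?_
    rw [Function.iterate_succ_apply']
    exact ((derivative^[n] P).hasDerivAt (x : ℂ)).comp_ofReal.hasDerivWithinAt
  have hE_zero : ∀ n < N, E n 0 = 0 := fun n hn => by
    simp only [E]
    rw [h0 n hn, Complex.ofReal_zero, ← coeff_zero_eq_eval_zero,
      coeff_zero_iterate_derivative_eq_zero hP hn, sub_zero]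
  have hE_top : ∀ x ∈ Icc 0 1, ‖E N x‖ ≤ ε := fun x hx => by simpa [E, hPQ] using (hQ x hx).le
  refine ⟨P, hP, fun x hx n hn => ?_⟩
  show ‖E n x‖ ≤ _
  calc ‖E n x‖ ≤ ε * (x - 0) ^ (N - n) / (N - n).factorial :=
        norm_le_mul_pow_div_factorial_of_hasDerivWithinAt hE_deriv hE_zero hE_top n hn x hx
    _ ≤ ε * x ^ (N - n) := by
        rw [sub_zero]
        exact div_le_self (by have := hx.1; positivity) (mod_cast (N - n).factorial_pos)
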